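/- Let H(t), t ∈ ℝ, be the Laplacian on a compact interval [0,ℓ₁] ∪ [0,ℓ₂] glued at an interior point v with the δ-condition of strength t (continuity at v and jump of derivatives equal to t·f(v)). Then −t is an eigenvalue of the 1×1 two-sided Dirichlet-to-Neumann map Λ_∞(c) (for c not in the Dirichlet spectrum at v) if and only if c is an eigenvalue of H(t), with equal multiplicities. -/

import Mathlib

/-!
A solution of `-u'' = k²u` with `u'(p) = 0` is `u(p) cos (k (x - p))`, by uniqueness for the
linear system `(u, u')' = (u', -k²u)`. Hence, when `cos (k ℓᵢ) ≠ 0`, a solution on either edge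
satisfying the Neumann condition and vanishing at `v` is zero, so an eigenfunction of `H(t)` has
a nonzero value `w` at `v` and is itself the DtN solution with data `w`: the δ-condition reads
`Λ w = -t w`. Conversely, suitably scaled cosine modes on the two edges glue to an eigenfunction.
-/

open Real

noncomputable def neumannMode (k p a x : ℝ) : ℝ := a * cos (k * (x - p))

noncomputable def neumannModeDeriv (k p a x : ℝ) : ℝ := -(a * k) * sin (k * (x - p))

section
variable (k p a : ℝ)

theorem hasDerivAt_neumannMode (x : ℝ) :
    HasDerivAt (neumannMode k p a) (neumannModeDeriv k p a x) x := by
  have h := ((hasDerivAt_id x).sub_const p).const_mul k |>.cos |>.const_mul a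
  exact h.congr_deriv (by simp only [neumannModeDeriv, id]; ring)

theorem hasDerivAt_neumannModeDeriv (x : ℝ) :
    HasDerivAt (neumannModeDeriv k p a) (-(k ^ 2) * neumannMode k p a x) x := by
  have h := ((hasDerivAt_id x).sub_const p).const_mul k |>.sin |>.const_mul (-(a * k))
  exact h.congr_deriv (by simp only [neumannMode, id]; ring)

@[simp]
theorem neumannMode_self : neumannMode k p a p = a := by simp [neumannMode]

@[simp]
theorem neumannModeDeriv_self : neumannModeDeriv k p a p = 0 := by simp [neumannModeDeriv]

end

section
variable {k : ℝ} {u d : ℝ → ℝ}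

theorem eq_zero_of_hasDerivAt_of_eq_zero (hu : ∀ x, HasDerivAt u (d x) x)
    (hd : ∀ x, HasDerivAt d (-(k ^ 2) * u x) x) {x₀ : ℝ} (hu₀ : u x₀ = 0) (hd₀ : d x₀ = 0) :
    u = 0 := by
  let L : ℝ × ℝ →L[ℝ] ℝ × ℝ :=
    (ContinuousLinearMap.snd ℝ ℝ ℝ).prod (-(k ^ 2) • ContinuousLinearMap.fst ℝ ℝ ℝ)
  have h : (fun x => (u x, d x)) = 0 :=
    ODE_solution_unique_univ (v := fun _ => L) (s := fun _ => Set.univ) (t₀ := x₀)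
      (fun _ => L.lipschitz.lipschitzOnWith)
      (fun x => ⟨(hu x).prodMk (hd x), trivial⟩)
      (fun x => ⟨by simp, trivial⟩)
      (by simp [hu₀, hd₀])
  funext x
  exact congrArg Prod.fst (congrFun h x)

theorem eq_neumannMode (hu : ∀ x, HasDerivAt u (d x) x)
    (hd : ∀ x, HasDerivAt d (-(k ^ 2) * u x) x) {p : ℝ} (hdp : d p = 0) :
    u = neumannMode k p (u p) := by
  have h := eq_zero_of_hasDerivAt_of_eq_zero (x₀ := p)
    (fun x => (hu x).sub (hasDerivAt_neumannMode k p (u p) x))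
    (fun x => ((hd x).sub (hasDerivAt_neumannModeDeriv k p (u p) x)).congr_deriv
      (by simp only [Pi.sub_apply]; ring))
    (by simp) (by simp [hdp])
  exact sub_eq_zero.mp h

theorem eq_zero_of_deriv_eq_zero_of_eq_zero (hu : ∀ x, HasDerivAt u (d x) x)
    (hd : ∀ x, HasDerivAt d (-(k ^ 2) * u x) x) {p q : ℝ} (hdp : d p = 0) (huq : u q = 0)
    (hpq : cos (k * (q - p)) ≠ 0) : u = 0 := by
  have hrep := eq_neumannMode hu hd hdp
  have hup : u p = 0 := by
    have := congrFun hrep q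
    rw [huq, neumannMode, eq_comm, mul_eq_zero] at this
    exact this.resolve_right hpq
  rwa [hup, show neumannMode k p 0 = 0 from funext fun x => by simp [neumannMode]] at hrep

end

theorem delta_dtn_eigenvalue_correspondence_general (ℓ₁ ℓ₂ k t : ℝ)
    (hc1 : Real.cos (k * ℓ₁) ≠ 0) (hc2 : Real.cos (k * ℓ₂) ≠ 0)
    (Λ : ℝ)
    (hΛ : ∀ w : ℝ, ∀ u₁ u₂ d₁ d₂ : ℝ → ℝ,
      (∀ x, HasDerivAt u₁ (d₁ x) x) → (∀ x, HasDerivAt d₁ (-(k ^ 2) * u₁ x) x) →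
      (∀ x, HasDerivAt u₂ (d₂ x) x) → (∀ x, HasDerivAt d₂ (-(k ^ 2) * u₂ x) x) →
      d₁ 0 = 0 → d₂ ℓ₂ = 0 → u₁ ℓ₁ = w → u₂ 0 = w →
      Λ * w = d₁ ℓ₁ - d₂ 0) :
    Λ = -t ↔
      ∃ u₁ u₂ d₁ d₂ : ℝ → ℝ,
        (∀ x, HasDerivAt u₁ (d₁ x) x) ∧ (∀ x, HasDerivAt d₁ (-(k ^ 2) * u₁ x) x) ∧
        (∀ x, HasDerivAt u₂ (d₂ x) x) ∧ (∀ x, HasDerivAt d₂ (-(k ^ 2) * u₂ x) x) ∧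
        d₁ 0 = 0 ∧ d₂ ℓ₂ = 0 ∧ u₁ ℓ₁ = u₂ 0 ∧
        d₂ 0 - d₁ ℓ₁ = t * u₁ ℓ₁ ∧ (u₁ ≠ 0 ∨ u₂ ≠ 0) := by
  constructor
  · rintro rfl
    -- Scaling the two Neumann modes by each other's Dirichlet value makes them agree at `v`.
    set a₁ := cos (k * ℓ₂)
    set a₂ := cos (k * ℓ₁)
    have hglue : neumannMode k 0 a₁ ℓ₁ = neumannMode k ℓ₂ a₂ 0 := by
      simp only [neumannMode, sub_zero, zero_sub, mul_neg, cos_neg, a₁, a₂, mul_comm]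
    have hDtN := hΛ _ _ _ _ _ (hasDerivAt_neumannMode k 0 a₁) (hasDerivAt_neumannModeDeriv k 0 a₁)
      (hasDerivAt_neumannMode k ℓ₂ a₂) (hasDerivAt_neumannModeDeriv k ℓ₂ a₂)
      (neumannModeDeriv_self k 0 a₁) (neumannModeDeriv_self k ℓ₂ a₂) rfl hglue.symm
    refine ⟨_, _, _, _, hasDerivAt_neumannMode k 0 a₁, hasDerivAt_neumannModeDeriv k 0 a₁,
      hasDerivAt_neumannMode k ℓ₂ a₂, hasDerivAt_neumannModeDeriv k ℓ₂ a₂,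
      neumannModeDeriv_self k 0 a₁, neumannModeDeriv_self k ℓ₂ a₂, hglue, by linarith, Or.inl ?_⟩
    intro h
    have := congrFun h ℓ₁
    simp only [neumannMode, sub_zero, Pi.zero_apply, mul_eq_zero] at this
    tauto
  · rintro ⟨u₁, u₂, d₁, d₂, hu₁, hd₁, hu₂, hd₂, hn₁, hn₂, hglue, hjump, hnontriv⟩
    have hw : u₁ ℓ₁ ≠ 0 := by
      intro h0
      rcases hnontriv with h | h
      · exact h (eq_zero_of_deriv_eq_zero_of_eq_zero hu₁ hd₁ hn₁ h0 (by rwa [sub_zero]))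
      · exact h (eq_zero_of_deriv_eq_zero_of_eq_zero hu₂ hd₂ hn₂ (hglue ▸ h0)
          (by rwa [zero_sub, mul_neg, cos_neg]))
    have hDtN := hΛ _ u₁ u₂ d₁ d₂ hu₁ hd₁ hu₂ hd₂ hn₁ hn₂ rfl hglue.symm
    exact mul_right_cancel₀ hw (by linarith)

/-- Two intervals `[0,ℓ₁]`, `[0,ℓ₂]` glued at an interior vertex `v`, with the
δ-condition of strength `t` at `v` and Neumann conditions at the outer ends.
Let `Λ` be the (1×1) two-sided Dirichlet-to-Neumann map at `v` for the
spectral parameter `c = k²` (not in the Dirichlet spectrum at `v`, i.e.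
`cos(kℓᵢ) ≠ 0`): it sends the value `w` at `v` to the derivative jump
`u₁'(v) − u₂'(v)`. Then `-t` is an eigenvalue of `Λ` iff `c` is an eigenvalue
of `H(t)`. -/
theorem delta_dtn_eigenvalue_correspondence (ℓ₁ ℓ₂ k t : ℝ)
    (h1 : 0 < ℓ₁) (h2 : 0 < ℓ₂) (hk : 0 < k)
    (hc1 : Real.cos (k * ℓ₁) ≠ 0) (hc2 : Real.cos (k * ℓ₂) ≠ 0)
    (Λ : ℝ)
    (hΛ : ∀ w : ℝ, ∀ u₁ u₂ d₁ d₂ : ℝ → ℝ,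
      (∀ x, HasDerivAt u₁ (d₁ x) x) → (∀ x, HasDerivAt d₁ (-(k ^ 2) * u₁ x) x) →
      (∀ x, HasDerivAt u₂ (d₂ x) x) → (∀ x, HasDerivAt d₂ (-(k ^ 2) * u₂ x) x) →
      d₁ 0 = 0 → d₂ ℓ₂ = 0 → u₁ ℓ₁ = w → u₂ 0 = w →
      Λ * w = d₁ ℓ₁ - d₂ 0) :
    Λ = -t ↔
      ∃ u₁ u₂ d₁ d₂ : ℝ → ℝ,
        (∀ x, HasDerivAt u₁ (d₁ x) x) ∧ (∀ x, HasDerivAt d₁ (-(k ^ 2) * u₁ x) x) ∧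
        (∀ x, HasDerivAt u₂ (d₂ x) x) ∧ (∀ x, HasDerivAt d₂ (-(k ^ 2) * u₂ x) x) ∧
        d₁ 0 = 0 ∧ d₂ ℓ₂ = 0 ∧ u₁ ℓ₁ = u₂ 0 ∧
        d₂ 0 - d₁ ℓ₁ = t * u₁ ℓ₁ ∧ (u₁ ≠ 0 ∨ u₂ ≠ 0) :=
  delta_dtn_eigenvalue_correspondence_general ℓ₁ ℓ₂ k t hc1 hc2 Λ hΛ
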